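/- Let d ≥ 2 and let (E_1, ..., E_n) be a POVM on C^d ⊗ C^d with the property that for every PPT state ρ and every NPT state σ there exists an index j with tr(ρE_j) ≠ tr(σE_j). Then (E_1, ..., E_n) is informationally complete, i.e., any two states ρ, σ on C^d ⊗ C^d satisfying tr(ρE_j) = tr(σE_j) for all j are equal. -/

import Mathlib

/-!
If two states `ρ ≠ σ` had the same statistics, `Δ = ρ - σ` would be a nonzero traceless Hermitian
matrix invisible to the POVM. Its partial transpose is still traceless and nonzero, hence has a
negative direction, which can be perturbed into an entangled unit vector `v` with
`⟪v, Δ^τ v⟫ < 0`. The state `μ = (1 - (v v*)^τ) / (d² - 1)` is PPT, since `μ^τ` is a multiple of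
the projection `1 - v v*`, and it is positive definite, since `(v v*)^τ` has norm `< 1` when `v`
is entangled. So `μ + t Δ` is still a state for small `t > 0`, but
`⟪v, (μ + t Δ)^τ v⟫ = t ⟪v, Δ^τ v⟫ < 0`: a PPT and an NPT state that the POVM cannot distinguish.
-/

open Matrix
open scoped ComplexOrder

noncomputable section

/-- A state (density matrix): positive semidefinite with trace 1. -/
def IsState {n : Type*} [Fintype n] (ρ : Matrix n n ℂ) : Prop :=
  ρ.PosSemidef ∧ ρ.trace = 1

/-- Partial transpose with respect to the second tensor factor. -/
def ptrans {d : ℕ} (ρ : Matrix (Fin d × Fin d) (Fin d × Fin d) ℂ) :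
    Matrix (Fin d × Fin d) (Fin d × Fin d) ℂ :=
  Matrix.of fun p q => ρ (p.1, q.2) (q.1, p.2)

open scoped MatrixOrder

section PartialTranspose

variable {d : ℕ}

@[simp]
lemma ptrans_apply (A : Matrix (Fin d × Fin d) (Fin d × Fin d) ℂ) (p q : Fin d × Fin d) :
    ptrans A p q = A (p.1, q.2) (q.1, p.2) := rfl

@[simp]
lemma ptrans_ptrans (A : Matrix (Fin d × Fin d) (Fin d × Fin d) ℂ) : ptrans (ptrans A) = A := rfl

lemma ptrans_add (A B : Matrix (Fin d × Fin d) (Fin d × Fin d) ℂ) :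
    ptrans (A + B) = ptrans A + ptrans B := rfl

lemma ptrans_sub (A B : Matrix (Fin d × Fin d) (Fin d × Fin d) ℂ) :
    ptrans (A - B) = ptrans A - ptrans B := rfl

lemma ptrans_smul {R : Type*} [SMul R ℂ] (c : R) (A : Matrix (Fin d × Fin d) (Fin d × Fin d) ℂ) :
    ptrans (c • A) = c • ptrans A := rfl

@[simp]
lemma ptrans_zero : ptrans (0 : Matrix (Fin d × Fin d) (Fin d × Fin d) ℂ) = 0 := rfl

@[simp]
lemma ptrans_one : ptrans (1 : Matrix (Fin d × Fin d) (Fin d × Fin d) ℂ) = 1 := by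
  ext ⟨i, k⟩ ⟨j, l⟩
  simp only [ptrans_apply, one_apply, Prod.mk.injEq]
  by_cases hij : i = j <;> by_cases hkl : k = l <;> simp [hij, hkl, eq_comm]

@[simp]
lemma ptrans_eq_zero_iff {A : Matrix (Fin d × Fin d) (Fin d × Fin d) ℂ} : ptrans A = 0 ↔ A = 0 :=
  ⟨fun h => by rw [← ptrans_ptrans A, h, ptrans_zero], fun h => h ▸ ptrans_zero⟩

@[simp]
lemma trace_ptrans (A : Matrix (Fin d × Fin d) (Fin d × Fin d) ℂ) : (ptrans A).trace = A.trace :=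
  rfl

lemma conjTranspose_ptrans (A : Matrix (Fin d × Fin d) (Fin d × Fin d) ℂ) :
    (ptrans A)ᴴ = ptrans Aᴴ := rfl

lemma Matrix.IsHermitian.ptrans {A : Matrix (Fin d × Fin d) (Fin d × Fin d) ℂ}
    (hA : A.IsHermitian) : (ptrans A).IsHermitian := by
  rw [IsHermitian, conjTranspose_ptrans, hA.eq]

lemma not_posSemidef_ptrans {A : Matrix (Fin d × Fin d) (Fin d × Fin d) ℂ} (htr : A.trace = 0)
    (hA : A ≠ 0) : ¬ (ptrans A).PosSemidef := fun h =>
  hA (ptrans_eq_zero_iff.mp (h.trace_eq_zero_iff.mp (by rw [trace_ptrans, htr])))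

end PartialTranspose

section QuadraticForm

variable {n : Type*} [Fintype n]

lemma star_dotProduct_self (y : n → ℂ) : star y ⬝ᵥ y = ((∑ p, ‖y p‖ ^ 2 : ℝ) : ℂ) := by
  simp [dotProduct, Complex.conj_mul']

lemma Matrix.PosDef.of_re_dotProduct_mulVec_pos {M : Matrix n n ℂ} (hM : M.IsHermitian)
    (h : ∀ x, x ≠ 0 → 0 < (star x ⬝ᵥ M *ᵥ x).re) : M.PosDef :=
  .of_dotProduct_mulVec_pos hM fun x hx =>
    RCLike.pos_iff.mpr ⟨h x hx, hM.im_star_dotProduct_mulVec_self x⟩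

lemma Matrix.IsHermitian.exists_re_dotProduct_mulVec_neg {M : Matrix n n ℂ} (hM : M.IsHermitian)
    (h : ¬ M.PosSemidef) : ∃ x, (star x ⬝ᵥ M *ᵥ x).re < 0 := by
  by_contra! H
  exact h (.of_dotProduct_mulVec_nonneg hM fun x =>
    RCLike.nonneg_iff.mpr ⟨H x, hM.im_star_dotProduct_mulVec_self x⟩)

lemma Matrix.PosDef.exists_posSemidef_add_smul [DecidableEq n] {M Δ : Matrix n n ℂ}
    (hM : M.PosDef) (hΔ : Δ.IsHermitian) : ∃ t : ℝ, 0 < t ∧ (M + t • Δ).PosSemidef := by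
  rcases isEmpty_or_nonempty n with hn | hn
  · exact ⟨1, one_pos, Subsingleton.elim (0 : Matrix n n ℂ) (M + (1 : ℝ) • Δ) ▸ .zero⟩
  obtain ⟨r, hr, hrM⟩ : ∃ r > 0, algebraMap ℝ (Matrix n n ℂ) r ≤ M :=
    (CFC.exists_pos_algebraMap_le_iff hM.isHermitian.isSelfAdjoint).2
      fun x hx => hM.isStrictlyPositive.spectrum_pos hx
  obtain ⟨K, hK⟩ := Δ.finite_real_spectrum.bddBelow
  have hKΔ : algebraMap ℝ (Matrix n n ℂ) (-(|K| + 1)) ≤ Δ :=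
    algebraMap_le_of_le_spectrum (ha := hΔ.isSelfAdjoint) fun x hx =>
      by linarith [hK hx, neg_abs_le K]
  set t := r / (|K| + 1)
  have ht : 0 < t := by positivity
  refine ⟨t, ht, nonneg_iff_posSemidef.mp ?_⟩
  calc (0 : Matrix n n ℂ) = algebraMap ℝ _ r + t • algebraMap ℝ _ (-(|K| + 1)) := by
        have : r + t * -(|K| + 1) = 0 := by simp only [t]; field_simp; ring
        rw [Algebra.smul_def, ← map_mul, ← map_add, this, map_zero]
    _ ≤ M + t • Δ := add_le_add hrM (smul_le_smul_of_nonneg_left hKΔ ht.le)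

lemma isStarProjection_vecMulVec_star {v : n → ℂ} (hv : star v ⬝ᵥ v = 1) :
    IsStarProjection (vecMulVec v (star v)) :=
  ⟨by rw [IsIdempotentElem, vecMulVec_mul_vecMulVec, hv, one_smul],
    (posSemidef_vecMulVec_self_star v).isHermitian⟩

lemma re_sum_mul_star_swap_le (A : n → n → ℂ) :
    (∑ i, ∑ j, A i j * star (A j i)).re ≤ ∑ i, ∑ j, ‖A i j‖ ^ 2 := by
  have hterm : ∀ i j, (A i j * star (A j i)).re ≤ (‖A i j‖ ^ 2 + ‖A j i‖ ^ 2) / 2 := fun i j => by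
    have := (A i j * star (A j i)).re_le_norm
    rw [norm_mul, norm_star] at this
    nlinarith [sq_nonneg (‖A i j‖ - ‖A j i‖)]
  calc (∑ i, ∑ j, A i j * star (A j i)).re = ∑ i, ∑ j, (A i j * star (A j i)).re := by
        simp only [Complex.re_sum]
    _ ≤ ∑ i, ∑ j, (‖A i j‖ ^ 2 + ‖A j i‖ ^ 2) / 2 := by gcongr with i _ j _; exact hterm i j
    _ = ∑ i, ∑ j, ‖A i j‖ ^ 2 := by
      simp only [add_div, Finset.sum_add_distrib]
      rw [Finset.sum_comm (f := fun i j => ‖A j i‖ ^ 2 / 2), ← Finset.sum_add_distrib]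
      simp_rw [← Finset.sum_add_distrib, add_halves]

end QuadraticForm

lemma norm_inner_lt_norm_mul_norm {𝕜 E : Type*} [RCLike 𝕜] [NormedAddCommGroup E]
    [InnerProductSpace 𝕜 E] {x y : E} (hx : x ≠ 0) (hy : y ∉ 𝕜 ∙ x) :
    ‖(inner 𝕜 x y : 𝕜)‖ < ‖x‖ * ‖y‖ :=
  (norm_inner_le_norm x y).lt_of_ne fun h =>
    hy (Or.resolve_left (((norm_inner_eq_norm_tfae 𝕜 x y).out 0 3).mp h) hx)

lemma exists_mem_Ioo_sq_add_mul_add_ne_zero (β γ : ℂ) {ε : ℝ} (hε : 0 < ε) :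
    ∃ t ∈ Set.Ioo 0 ε, (t : ℂ) ^ 2 + β * t + γ ≠ 0 := by
  by_contra! h
  have h2 := h (ε / 2) ⟨by positivity, by linarith⟩
  have h3 := h (ε / 3) ⟨by positivity, by linarith⟩
  have h4 := h (ε / 4) ⟨by positivity, by linarith⟩
  push_cast at h2 h3 h4
  -- Lagrange interpolation at `ε/2, ε/3, ε/4`: these weights cancel the linear and constant terms.
  have : (ε : ℂ) ^ 2 = 0 := by linear_combination 24 * h2 - 72 * h3 + 48 * h4
  exact hε.ne' (by exact_mod_cast pow_eq_zero_iff (n := 2) two_ne_zero |>.mp this)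

/-- Entanglement (Schmidt rank at least two) of a vector of `ℂ^ι ⊗ ℂ^κ`, expressed as a nonzero
`2 × 2` minor of its coefficient matrix. -/
def IsEntangled {ι κ : Type*} (v : ι × κ → ℂ) : Prop :=
  ∃ i i' l l', v (i, l) * v (i', l') ≠ v (i, l') * v (i', l)

section Entangled

variable {ι κ : Type*} {v : ι × κ → ℂ}

lemma IsEntangled.smul (hv : IsEntangled v) {c : ℂ} (hc : c ≠ 0) : IsEntangled (c • v) := by
  obtain ⟨i, i', l, l', h⟩ := hv
  refine ⟨i, i', l, l', fun h' => h ?_⟩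
  simp only [Pi.smul_apply, smul_eq_mul] at h'
  have : c ^ 2 * (v (i, l) * v (i', l') - v (i, l') * v (i', l)) = 0 := by
    linear_combination h'
  exact sub_eq_zero.mp ((mul_eq_zero.mp this).resolve_left (pow_ne_zero 2 hc))

lemma IsEntangled.exists_row_notMem_span (hv : IsEntangled v) (u : EuclideanSpace ℂ κ) :
    ∃ i, WithLp.toLp 2 (star fun l => v (i, l)) ∉ ℂ ∙ u := by
  obtain ⟨i, i', l, l', h⟩ := hv
  by_contra! hrows
  obtain ⟨c, hc⟩ := Submodule.mem_span_singleton.mp (hrows i)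
  obtain ⟨c', hc'⟩ := Submodule.mem_span_singleton.mp (hrows i')
  have hrow : ∀ (c : ℂ) (i : ι), c • u = WithLp.toLp 2 (star fun l => v (i, l)) →
      ∀ l, v (i, l) = star (c * u l) := fun c i h l => by
    simpa using congr(star ($h l)).symm
  apply h
  rw [hrow c i hc, hrow c i hc, hrow c' i' hc', hrow c' i' hc']
  simp only [star_mul']
  ring

variable [Fintype ι] [Fintype κ]

lemma IsEntangled.sum_norm_sum_mul_sq_lt (hv : IsEntangled v) {u : κ → ℂ} (hu : u ≠ 0) :
    ∑ i, ‖∑ l, v (i, l) * u l‖ ^ 2 < (∑ p, ‖v p‖ ^ 2) * ∑ l, ‖u l‖ ^ 2 := by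
  set a : ι → EuclideanSpace ℂ κ := fun i => WithLp.toLp 2 (star fun l => v (i, l))
  set u' : EuclideanSpace ℂ κ := WithLp.toLp 2 u
  have hu' : u' ≠ 0 := by simpa [u'] using hu
  have hinner : ∀ i, inner ℂ u' (a i) = star (∑ l, v (i, l) * u l) := fun i => by
    simp [a, u', PiLp.inner_apply, mul_comm]
  have hnorm_a : ∀ i, ‖a i‖ ^ 2 = ∑ l, ‖v (i, l)‖ ^ 2 := fun i => by
    simp [a, EuclideanSpace.norm_sq_eq]
  have hnorm_u : ‖u'‖ ^ 2 = ∑ l, ‖u l‖ ^ 2 := by simp [u', EuclideanSpace.norm_sq_eq]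
  obtain ⟨i₀, hi₀⟩ := hv.exists_row_notMem_span u'
  calc ∑ i, ‖∑ l, v (i, l) * u l‖ ^ 2 = ∑ i, ‖inner ℂ u' (a i)‖ ^ 2 := by
        simp only [hinner, norm_star]
    _ < ∑ i, (‖u'‖ * ‖a i‖) ^ 2 := by
      refine Finset.sum_lt_sum (fun i _ => ?_) ⟨i₀, Finset.mem_univ _, ?_⟩
      · gcongr; exact norm_inner_le_norm _ _
      · gcongr; exact norm_inner_lt_norm_mul_norm hu' hi₀
    _ = (∑ p, ‖v p‖ ^ 2) * ∑ l, ‖u l‖ ^ 2 := by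
      simp only [mul_pow, hnorm_a, hnorm_u, ← Finset.mul_sum, Fintype.sum_prod_type, mul_comm]

variable [Nontrivial ι] [Nontrivial κ]

lemma exists_isEntangled_re_dotProduct_mulVec_neg (w : Matrix (ι × κ) (ι × κ) ℂ)
    {x : ι × κ → ℂ} (hx : (star x ⬝ᵥ w *ᵥ x).re < 0) :
    ∃ v, IsEntangled v ∧ (star v ⬝ᵥ w *ᵥ v).re < 0 := by
  classical
  obtain ⟨i, i', hi⟩ := exists_pair_ne ι
  obtain ⟨l, l', hl⟩ := exists_pair_ne κ
  set g : ι × κ → ℂ := Pi.single (i, l) 1 + Pi.single (i', l') 1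
  have hcont : Continuous fun t : ℝ => (star (x + (t : ℂ) • g) ⬝ᵥ w *ᵥ (x + (t : ℂ) • g)).re := by
    fun_prop
  obtain ⟨ε, hε, hneg⟩ := Metric.eventually_nhds_iff.mp
    ((hcont.continuousAt (x := 0)).eventually_lt continuousAt_const (by simpa using hx))
  -- Along `x + t • g` the minor at rows `i, i'` and columns `l, l'` is a monic quadratic in `t`.
  obtain ⟨t, ⟨ht₀, htε⟩, hminor⟩ := exists_mem_Ioo_sq_add_mul_add_ne_zero
    (x (i, l) + x (i', l')) (x (i, l) * x (i', l') - x (i, l') * x (i', l)) hε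
  refine ⟨x + (t : ℂ) • g, ⟨i, i', l, l', fun h => hminor ?_⟩,
    hneg (by rwa [Real.dist_0_eq_abs, abs_of_pos ht₀])⟩
  simp only [g, Pi.add_apply, Pi.smul_apply, smul_add, smul_eq_mul, Pi.single_eq_same,
    Pi.single_eq_of_ne, ne_eq, Prod.mk.injEq, hi, hl, hi.symm, hl.symm, and_false, false_and,
    not_false_eq_true, mul_one, mul_zero, add_zero] at h
  linear_combination h

lemma exists_isEntangled_unit_re_dotProduct_mulVec_neg (w : Matrix (ι × κ) (ι × κ) ℂ)
    {x : ι × κ → ℂ} (hx : (star x ⬝ᵥ w *ᵥ x).re < 0) :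
    ∃ v, IsEntangled v ∧ star v ⬝ᵥ v = 1 ∧ (star v ⬝ᵥ w *ᵥ v).re < 0 := by
  obtain ⟨v, hv, hvw⟩ := exists_isEntangled_re_dotProduct_mulVec_neg w hx
  have hv₀ : v ≠ 0 := by rintro rfl; simp at hvw
  set s := ∑ p, ‖v p‖ ^ 2
  have hs : 0 < s := by
    obtain ⟨p, hp⟩ := Function.ne_iff.mp hv₀
    exact Finset.sum_pos' (fun _ _ => by positivity) ⟨p, Finset.mem_univ _, by positivity⟩
  set c : ℝ := (√s)⁻¹
  have hc : 0 < c := by positivity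
  have hc2 : c ^ 2 * s = 1 := by simp [c, inv_pow, Real.sq_sqrt hs.le, hs.ne']
  have hstar : star ((c : ℂ) • v) = (c : ℂ) • star v := by simp [star_smul]
  refine ⟨(c : ℂ) • v, hv.smul (by exact_mod_cast hc.ne'), ?_, ?_⟩
  · rw [hstar, smul_dotProduct, dotProduct_smul, star_dotProduct_self, smul_eq_mul, smul_eq_mul]
    exact_mod_cast by linear_combination hc2
  · rw [hstar, mulVec_smul, smul_dotProduct, dotProduct_smul, smul_eq_mul, smul_eq_mul,
      ← mul_assoc, ← Complex.ofReal_mul, Complex.re_ofReal_mul]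
    exact mul_neg_of_pos_of_neg (by positivity) hvw

end Entangled

section BoundaryState

variable {d : ℕ}

lemma star_dotProduct_ptrans_vecMulVec_mulVec (v y : Fin d × Fin d → ℂ) :
    star y ⬝ᵥ ptrans (vecMulVec v (star v)) *ᵥ y =
      ∑ i, ∑ j, (∑ l, v (i, l) * y (j, l)) * star (∑ k, v (j, k) * y (i, k)) := by
  simp only [dotProduct, mulVec, Fintype.sum_prod_type, ptrans_apply, vecMulVec_apply,
    Finset.mul_sum, Finset.sum_mul, star_sum, Pi.star_apply, star_mul']
  refine Finset.sum_congr rfl fun i _ => ?_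
  rw [Finset.sum_comm]
  refine Finset.sum_congr rfl fun j _ => Finset.sum_congr rfl fun k _ => ?_
  exact Finset.sum_congr rfl fun l _ => by ring

lemma re_star_dotProduct_ptrans_vecMulVec_mulVec_lt {v : Fin d × Fin d → ℂ} (hv : IsEntangled v)
    (hv1 : star v ⬝ᵥ v = 1) {y : Fin d × Fin d → ℂ} (hy : y ≠ 0) :
    (star y ⬝ᵥ ptrans (vecMulVec v (star v)) *ᵥ y).re < ∑ p, ‖y p‖ ^ 2 := by
  have hv_norm : ∑ p, ‖v p‖ ^ 2 = 1 := by
    rw [star_dotProduct_self] at hv1; exact_mod_cast hv1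
  rw [star_dotProduct_ptrans_vecMulVec_mulVec]
  refine (re_sum_mul_star_swap_le _).trans_lt ?_
  rw [Finset.sum_comm, Fintype.sum_prod_type]
  obtain ⟨p, hp⟩ := Function.ne_iff.mp hy
  refine Finset.sum_lt_sum (fun j _ => ?_) ⟨p.1, Finset.mem_univ _, ?_⟩
  · by_cases hyj : (fun l => y (j, l)) = 0
    · simp [show ∀ l, y (j, l) = 0 from congrFun hyj]
    · simpa [hv_norm] using (hv.sum_norm_sum_mul_sq_lt hyj).le
  · simpa [hv_norm] using
      hv.sum_norm_sum_mul_sq_lt (u := fun l => y (p.1, l)) (Function.ne_iff.mpr ⟨p.2, hp⟩)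

lemma posDef_one_sub_ptrans_vecMulVec {v : Fin d × Fin d → ℂ} (hv : IsEntangled v)
    (hv1 : star v ⬝ᵥ v = 1) : (1 - ptrans (vecMulVec v (star v))).PosDef := by
  refine .of_re_dotProduct_mulVec_pos
    (isHermitian_one.sub (posSemidef_vecMulVec_self_star v).isHermitian.ptrans) fun y hy => ?_
  rw [sub_mulVec, one_mulVec, dotProduct_sub, Complex.sub_re, star_dotProduct_self,
    Complex.ofReal_re, sub_pos]
  exact re_star_dotProduct_ptrans_vecMulVec_mulVec_lt hv hv1 hy

lemma sq_sub_one_pos (hd : 2 ≤ d) : (0 : ℝ) < (d : ℝ) ^ 2 - 1 := by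
  have : (2 : ℝ) ≤ d := by exact_mod_cast hd
  nlinarith

def pptBoundaryState (v : Fin d × Fin d → ℂ) : Matrix (Fin d × Fin d) (Fin d × Fin d) ℂ :=
  ((d : ℝ) ^ 2 - 1)⁻¹ • (1 - ptrans (vecMulVec v (star v)))

variable {v : Fin d × Fin d → ℂ}

lemma ptrans_pptBoundaryState :
    ptrans (pptBoundaryState v) = ((d : ℝ) ^ 2 - 1)⁻¹ • (1 - vecMulVec v (star v)) := by
  rw [pptBoundaryState, ptrans_smul, ptrans_sub, ptrans_one, ptrans_ptrans]

lemma posDef_pptBoundaryState (hd : 2 ≤ d) (hv : IsEntangled v) (hv1 : star v ⬝ᵥ v = 1) :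
    (pptBoundaryState v).PosDef :=
  (posDef_one_sub_ptrans_vecMulVec hv hv1).smul (inv_pos.mpr (sq_sub_one_pos hd))

lemma trace_pptBoundaryState (hd : 2 ≤ d) (hv1 : star v ⬝ᵥ v = 1) :
    (pptBoundaryState v).trace = 1 := by
  rw [pptBoundaryState, trace_smul, trace_sub, trace_one, trace_ptrans, trace_vecMulVec,
    dotProduct_comm, hv1, Fintype.card_prod, Fintype.card_fin, Complex.real_smul]
  push_cast
  rw [← sq, inv_mul_cancel₀ (by exact_mod_cast (sq_sub_one_pos hd).ne')]

lemma posSemidef_ptrans_pptBoundaryState (hd : 2 ≤ d) (hv1 : star v ⬝ᵥ v = 1) :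
    (ptrans (pptBoundaryState v)).PosSemidef := by
  rw [ptrans_pptBoundaryState]
  exact .smul (nonneg_iff_posSemidef.mp (isStarProjection_vecMulVec_star hv1).one_sub.nonneg)
    (inv_nonneg.mpr (sq_sub_one_pos hd).le)

lemma star_dotProduct_ptrans_pptBoundaryState_mulVec_self (hv1 : star v ⬝ᵥ v = 1) :
    star v ⬝ᵥ ptrans (pptBoundaryState v) *ᵥ v = 0 := by
  rw [ptrans_pptBoundaryState, smul_mulVec, sub_mulVec, one_mulVec, vecMulVec_mulVec, hv1,
    MulOpposite.op_one, one_smul, sub_self, smul_zero, dotProduct_zero]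

end BoundaryState

theorem exists_ppt_npt_states_eq_add_smul {d : ℕ} (hd : 2 ≤ d)
    {Δ : Matrix (Fin d × Fin d) (Fin d × Fin d) ℂ} (hΔ : Δ.IsHermitian) (htr : Δ.trace = 0)
    (hne : Δ ≠ 0) :
    ∃ ρ σ : Matrix (Fin d × Fin d) (Fin d × Fin d) ℂ, IsState ρ ∧ (ptrans ρ).PosSemidef ∧
      IsState σ ∧ ¬ (ptrans σ).PosSemidef ∧ ∃ t : ℝ, σ = ρ + t • Δ := by
  have : Nontrivial (Fin d) := Fin.nontrivial_iff_two_le.mpr hd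
  obtain ⟨x, hx⟩ := hΔ.ptrans.exists_re_dotProduct_mulVec_neg (not_posSemidef_ptrans htr hne)
  obtain ⟨v, hv, hv1, hvΔ⟩ := exists_isEntangled_unit_re_dotProduct_mulVec_neg _ hx
  have hρ := posDef_pptBoundaryState hd hv hv1
  obtain ⟨t, ht, hσ⟩ := hρ.exists_posSemidef_add_smul hΔ
  refine ⟨_, _, ⟨hρ.posSemidef, trace_pptBoundaryState hd hv1⟩,
    posSemidef_ptrans_pptBoundaryState hd hv1, ⟨hσ, ?_⟩, fun h => ?_, t, rfl⟩
  · rw [trace_add, trace_smul, htr, smul_zero, add_zero, trace_pptBoundaryState hd hv1]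
  · have := h.re_dotProduct_nonneg v
    rw [ptrans_add, ptrans_smul, add_mulVec, smul_mulVec, dotProduct_add,
      star_dotProduct_ptrans_pptBoundaryState_mulVec_self hv1, zero_add, dotProduct_smul,
      RCLike.smul_re] at this
    exact (mul_neg_of_pos_of_neg ht hvΔ).not_ge this

theorem stmt11_general (d n : ℕ) (hd : 2 ≤ d)
    (E : Fin n → Matrix (Fin d × Fin d) (Fin d × Fin d) ℂ)
    (hdetect : ∀ ρ σ : Matrix (Fin d × Fin d) (Fin d × Fin d) ℂ,
      IsState ρ → (ptrans ρ).PosSemidef → IsState σ → ¬ (ptrans σ).PosSemidef →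
        ∃ j, (ρ * E j).trace ≠ (σ * E j).trace) :
    ∀ ρ σ : Matrix (Fin d × Fin d) (Fin d × Fin d) ℂ,
      IsState ρ → IsState σ → (∀ j, (ρ * E j).trace = (σ * E j).trace) → ρ = σ := by
  intro ρ σ hρ hσ hstat
  by_contra hne
  obtain ⟨μ, _, hμ, hμppt, hσ', hσ'npt, t, rfl⟩ := exists_ppt_npt_states_eq_add_smul hd
    (hρ.1.isHermitian.sub hσ.1.isHermitian) (by rw [trace_sub, hρ.2, hσ.2, sub_self])
    (sub_ne_zero.mpr hne)
  obtain ⟨j, hj⟩ := hdetect μ _ hμ hμppt hσ' hσ'npt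
  exact hj (by rw [add_mul, trace_add, smul_mul_assoc, trace_smul, sub_mul, trace_sub, hstat j,
    sub_self, smul_zero, add_zero])

theorem stmt11 (d n : ℕ) (hd : 2 ≤ d)
    (E : Fin n → Matrix (Fin d × Fin d) (Fin d × Fin d) ℂ)
    (hEpos : ∀ j, (E j).PosSemidef) (hEsum : (∑ j, E j) = 1)
    (hdetect : ∀ ρ σ : Matrix (Fin d × Fin d) (Fin d × Fin d) ℂ,
      IsState ρ → (ptrans ρ).PosSemidef → IsState σ → ¬ (ptrans σ).PosSemidef →
        ∃ j, (ρ * E j).trace ≠ (σ * E j).trace) :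
    ∀ ρ σ : Matrix (Fin d × Fin d) (Fin d × Fin d) ℂ,
      IsState ρ → IsState σ → (∀ j, (ρ * E j).trace = (σ * E j).trace) → ρ = σ :=
  stmt11_general d n hd E hdetect

end
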